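/- arXiv:2605.29139 — 2 statements merged into one kernel-verified Lean document; each statement's English description precedes it below -/
import Mathlib

section
/- Let (Z_t) be adapted with Z_t ≥ -b_t pointwise, λ_t predictable with λ_t ∈ [0, 1/b_t], and let G_t be an F_{t-1}-measurable event for each t such that E[Z_t | F_{t-1}] ≤ 0 on G_t. Define E_0 = 1, E_t = E_{t-1}(1 + λ_t Z_t), and the truncated process Ẽ_t = E_t · 1_{∩_{s≤t} G_s}. Then (Ẽ_t) is a nonnegative supermartingale with Ẽ_0 = 1. -/
open MeasureTheory

/-!
On the event `G (t+1)` the increment of the betting process is `Ẽ_t λ_{t+1} Z_{t+1}`, whose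
coefficient `Ẽ_t λ_{t+1}` is nonnegative and `𝓕 t`-measurable, so pulling it out of the
conditional expectation leaves `E[Z_{t+1} | 𝓕 t] ≤ 0`; off `G (t+1)` the truncated process
drops to `0 ≤ Ẽ_t`. Nonnegativity comes from `1 + λ Z ≥ 1 - λ b ≥ 0`.
-/

lemma one_add_mul_nonneg_of_le_one_div {b z l : ℝ} (hb : 0 < b) (hz : -b ≤ z) (hl0 : 0 ≤ l)
    (hl1 : l ≤ 1 / b) : 0 ≤ 1 + l * z := by
  have hlb : l * b ≤ 1 := (le_div_iff₀ hb).mp hl1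
  nlinarith [mul_le_mul_of_nonneg_left hz hl0]

theorem condExp_add_mul_le {Ω : Type*} {m m0 : MeasurableSpace Ω} {μ : Measure Ω}
    (hm : m ≤ m0) [SigmaFinite (μ.trim hm)] {Y H Z : Ω → ℝ}
    (hY : StronglyMeasurable[m] Y) (hYint : Integrable Y μ)
    (hH : StronglyMeasurable[m] H) (hH0 : 0 ≤ H)
    (hHZ : Integrable (H * Z) μ) (hZ : Integrable Z μ)
    (hZcond : ∀ᵐ ω ∂μ, 0 < H ω → μ[Z | m] ω ≤ 0) :
    μ[Y + H * Z | m] ≤ᵐ[μ] Y := by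
  filter_upwards [condExp_add hYint hHZ m, condExp_mul_of_stronglyMeasurable_left hH hHZ hZ,
    hZcond] with ω hadd hmul hneg
  rw [hadd, Pi.add_apply, condExp_of_stronglyMeasurable hm hY hYint, hmul, Pi.mul_apply]
  rcases (hH0 ω).eq_or_lt with hzero | hpos
  · simp [← hzero]
  · linarith [mul_nonpos_of_nonneg_of_nonpos (hH0 ω) (hneg hpos)]

lemma biInter_Icc_one_succ {α : Type*} (G : ℕ → Set α) (t : ℕ) :
    ⋂ s ∈ Finset.Icc 1 (t + 1), G s = G (t + 1) ∩ ⋂ s ∈ Finset.Icc 1 t, G s := by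
  rw [← Finset.insert_Icc_right_eq_Icc_add_one (by omega), Finset.set_biInter_insert]

section BettingProcess

variable {Ω : Type*} {m0 : MeasurableSpace Ω} {𝓕 : Filtration ℕ m0}
  {Z lam E Etil : ℕ → Ω → ℝ} {G : ℕ → Set Ω}

lemma measurableSet_biInter_Icc_one (hG : ∀ t, MeasurableSet[𝓕 (t - 1)] (G t)) (t : ℕ) :
    MeasurableSet[𝓕 t] (⋂ s ∈ Finset.Icc 1 t, G s) :=
  .biInter (Set.to_countable _) fun s hs =>
    𝓕.mono (by have := (Finset.mem_Icc.mp hs).2; omega) _ (hG s)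

lemma adapted_of_mul_rec (hZ : Adapted 𝓕 Z) (hlam : ∀ t, Measurable[𝓕 (t - 1)] (lam t))
    (hE0 : Measurable[𝓕 0] (E 0))
    (hErec : ∀ t ω, E (t + 1) ω = E t ω * (1 + lam (t + 1) ω * Z (t + 1) ω)) :
    Adapted 𝓕 E := by
  intro t
  induction t with
  | zero => exact hE0
  | succ n ih =>
    rw [funext (hErec n)]
    have hle := 𝓕.mono n.le_succ
    exact (ih.mono hle le_rfl).mul
      (measurable_const.add (((hlam (n + 1)).mono hle le_rfl).mul (hZ (n + 1))))

lemma nonneg_of_mul_rec (hE0 : ∀ ω, 0 ≤ E 0 ω) (hfac : ∀ t ω, 0 ≤ 1 + lam t ω * Z t ω)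
    (hErec : ∀ t ω, E (t + 1) ω = E t ω * (1 + lam (t + 1) ω * Z (t + 1) ω)) :
    ∀ t ω, 0 ≤ E t ω := by
  intro t
  induction t with
  | zero => exact hE0
  | succ n ih => exact fun ω => (hErec n ω).symm ▸ mul_nonneg (ih ω) (hfac (n + 1) ω)

lemma truncated_succ_eq
    (hErec : ∀ t ω, E (t + 1) ω = E t ω * (1 + lam (t + 1) ω * Z (t + 1) ω))
    (hEtil : ∀ t ω, Etil t ω = E t ω * Set.indicator (⋂ s ∈ Finset.Icc 1 t, G s) 1 ω)
    (t : ℕ) :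
    Etil (t + 1) = (G (t + 1)).indicator (Etil t)
      + (G (t + 1)).indicator (Etil t) * lam (t + 1) * Z (t + 1) := by
  ext ω
  rw [hEtil, hErec, biInter_Icc_one_succ, Set.inter_indicator_one]
  by_cases hω : ω ∈ G (t + 1)
  · simp only [Pi.add_apply, Pi.mul_apply, Pi.one_apply, Set.indicator_of_mem hω, one_mul, hEtil]
    ring
  · simp [hω]

end BettingProcess

theorem stmt1_general
    {Ω : Type*} [m0 : MeasurableSpace Ω] (μ : Measure Ω) [IsProbabilityMeasure μ]
    (𝓕 : Filtration ℕ m0)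
    (Z b lam : ℕ → Ω → ℝ) (G : ℕ → Set Ω)
    (hZadapted : Adapted 𝓕 Z)
    (hZint : ∀ t, Integrable (Z t) μ)
    (hlam_pred : ∀ t, Measurable[𝓕 (t - 1)] (lam t))
    (hG_meas : ∀ t, MeasurableSet[𝓕 (t - 1)] (G t))
    (hb0 : ∀ t ω, 0 < b t ω)
    (hZlo : ∀ t ω, -(b t ω) ≤ Z t ω)
    (hlam0 : ∀ t ω, 0 ≤ lam t ω) (hlam1 : ∀ t ω, lam t ω ≤ 1 / b t ω)
    (hcondZ : ∀ t ≥ 1, ∀ᵐ ω ∂μ, ω ∈ G t → (μ[Z t | 𝓕 (t - 1)]) ω ≤ 0)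
    (E Etil : ℕ → Ω → ℝ)
    (hE0 : ∀ ω, E 0 ω = 1)
    (hErec : ∀ t ω, E (t + 1) ω = E t ω * (1 + lam (t + 1) ω * Z (t + 1) ω))
    (hEtil : ∀ t ω, Etil t ω = E t ω * Set.indicator (⋂ s ∈ Finset.Icc 1 t, G s) 1 ω)
    (hEtil_int : ∀ t, Integrable (Etil t) μ) :
    Supermartingale Etil 𝓕 μ ∧ (∀ ω, Etil 0 ω = 1) ∧ (∀ t ω, 0 ≤ Etil t ω) := by
  have hE_nonneg := nonneg_of_mul_rec (by simp [hE0])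
    (fun t ω => one_add_mul_nonneg_of_le_one_div (hb0 t ω) (hZlo t ω) (hlam0 t ω) (hlam1 t ω))
    hErec
  have hEtil_nonneg : ∀ t ω, 0 ≤ Etil t ω := fun t ω => (hEtil t ω).symm ▸
    mul_nonneg (hE_nonneg t ω) (Set.indicator_nonneg (fun _ _ => zero_le_one) ω)
  have hEtil_adapted : Adapted 𝓕 Etil := fun t => by
    rw [funext (hEtil t)]
    exact (adapted_of_mul_rec hZadapted hlam_pred (by simp [funext hE0]) hErec t).mul
      (measurable_const.indicator (measurableSet_biInter_Icc_one hG_meas t))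
  refine ⟨supermartingale_nat (fun t => (hEtil_adapted t).stronglyMeasurable) hEtil_int
    fun t => ?_, fun ω => by simp [hEtil, hE0], hEtil_nonneg⟩
  have hstep := truncated_succ_eq hErec hEtil t
  set Y := (G (t + 1)).indicator (Etil t)
  have hY : Measurable[𝓕 t] Y := (hEtil_adapted t).indicator (hG_meas (t + 1))
  have hYint : Integrable Y μ := (hEtil_int t).indicator (𝓕.le t _ (hG_meas (t + 1)))
  have hHZint : Integrable (Y * lam (t + 1) * Z (t + 1)) μ := by
    simpa [hstep] using (hEtil_int (t + 1)).sub hYint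
  rw [hstep]
  refine (condExp_add_mul_le (𝓕.le t) hY.stronglyMeasurable hYint
    (hY.mul (hlam_pred (t + 1))).stronglyMeasurable
    (fun ω => mul_nonneg (Set.indicator_nonneg (fun ω _ => hEtil_nonneg t ω) ω) (hlam0 _ ω))
    hHZint (hZint _) ?_).trans (.of_forall (Set.indicator_le_self' fun ω _ => hEtil_nonneg t ω))
  filter_upwards [hcondZ (t + 1) (by omega)] with ω hω hpos
  exact hω (Set.mem_of_indicator_ne_zero (left_ne_zero_of_mul hpos.ne'))

/-- the truncated betting e-process `Ẽ_t = E_t · 1_{∩_{s≤t} G_s}` is a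
nonnegative supermartingale with `Ẽ_0 = 1`, where `E_0 = 1`,
`E_t = E_{t-1}(1 + λ_t Z_t)`, `Z_t ≥ -b_t`, `λ_t ∈ [0, 1/b_t]` is predictable, each
`G_t` is `F_{t-1}`-measurable, and `E[Z_t | F_{t-1}] ≤ 0` on `G_t`. -/
theorem stmt1
    {Ω : Type*} [m0 : MeasurableSpace Ω] (μ : Measure Ω) [IsProbabilityMeasure μ]
    (𝓕 : Filtration ℕ m0)
    (Z b lam : ℕ → Ω → ℝ) (G : ℕ → Set Ω)
    (hZadapted : Adapted 𝓕 Z)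
    (hZint : ∀ t, Integrable (Z t) μ)
    (hb_pred : ∀ t, Measurable[𝓕 (t - 1)] (b t))
    (hlam_pred : ∀ t, Measurable[𝓕 (t - 1)] (lam t))
    (hG_meas : ∀ t, MeasurableSet[𝓕 (t - 1)] (G t))
    (hb0 : ∀ t ω, 0 < b t ω)
    (hZlo : ∀ t ω, -(b t ω) ≤ Z t ω)
    (hlam0 : ∀ t ω, 0 ≤ lam t ω) (hlam1 : ∀ t ω, lam t ω ≤ 1 / b t ω)
    (hcondZ : ∀ t ≥ 1, ∀ᵐ ω ∂μ, ω ∈ G t → (μ[Z t | 𝓕 (t - 1)]) ω ≤ 0)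
    (E Etil : ℕ → Ω → ℝ)
    (hE0 : ∀ ω, E 0 ω = 1)
    (hErec : ∀ t ω, E (t + 1) ω = E t ω * (1 + lam (t + 1) ω * Z (t + 1) ω))
    (hEtil : ∀ t ω, Etil t ω = E t ω * Set.indicator (⋂ s ∈ Finset.Icc 1 t, G s) 1 ω)
    (hEtil_int : ∀ t, Integrable (Etil t) μ) :
    Supermartingale Etil 𝓕 μ ∧ (∀ ω, Etil 0 ω = 1) ∧ (∀ t ω, 0 ≤ Etil t ω) :=
  stmt1_general (m0 := m0) μ 𝓕 Z b lam G hZadapted hZint hlam_pred hG_meas hb0 hZlo hlam0 hlam1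
    hcondZ E Etil hE0 hErec hEtil hEtil_int
end

section
/- Let P and Q be probability measures on a finite set with KL(P‖Q) = ε. Then E_P[|log(P(y)/Q(y))|] ≤ ε + √(2ε). -/
open Real Set InformationTheory

/-!
Write `Δ = log (P/Q)`. Since `p - q ≤ p log (p/q)` pointwise, the negative part of `P Δ` is at
most `(Q - P)⁺`, so `E_P|Δ| ≤ KL + ∑ |P - Q|`. The total variation term is controlled by Pinsker's
inequality `∑ |P - Q| ≤ √(2 KL)`, proved via the pointwise bound
`3 (t - 1)² ≤ (2t + 4) klFun t` and the Cauchy–Schwarz inequality.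
-/

lemma mul_klFun_div {x y : ℝ} (hy : y ≠ 0) :
    y * klFun (x / y) = x * log (x / y) + y - x := by
  rw [klFun_apply]
  field_simp

lemma sub_le_mul_log_div {x y : ℝ} (hx : 0 ≤ x) (hy : 0 < y) : x - y ≤ x * log (x / y) := by
  have := mul_nonneg hy.le (klFun_nonneg (div_nonneg hx hy.le))
  rw [mul_klFun_div hy.ne'] at this
  linarith

lemma monotoneOn_add_one_mul_log_sub :
    MonotoneOn (fun t ↦ (t + 1) * log t - 2 * (t - 1)) (Ioi 0) := by
  have hderiv (t : ℝ) (ht : t ≠ 0) :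
      HasDerivAt (fun t ↦ (t + 1) * log t - 2 * (t - 1)) (log t + t⁻¹ - 1) t := by
    refine ((((hasDerivAt_id t).add_const 1).mul (hasDerivAt_log ht)).sub
      (((hasDerivAt_id t).sub_const 1).const_mul 2)).congr_deriv ?_
    simp only [id]
    field_simp
    ring
  refine monotoneOn_of_hasDerivWithinAt_nonneg (convex_Ioi 0)
    (fun t ht ↦ (hderiv t (ne_of_gt ht)).continuousAt.continuousWithinAt)
    (fun t ht ↦ (hderiv t (ne_of_gt (interior_subset ht : t ∈ Ioi 0))).hasDerivWithinAt)
    (fun t ht ↦ ?_)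
  rw [interior_Ioi] at ht
  have := log_le_sub_one_of_pos (inv_pos.mpr ht)
  rw [log_inv] at this
  linarith

lemma three_mul_sq_sub_one_le_mul_klFun {t : ℝ} (ht : 0 ≤ t) :
    3 * (t - 1) ^ 2 ≤ (2 * t + 4) * klFun t := by
  set g : ℝ → ℝ := fun t ↦ (2 * t + 4) * klFun t - 3 * (t - 1) ^ 2
  set p : ℝ → ℝ := fun t ↦ (t + 1) * log t - 2 * (t - 1)
  have hg' (x : ℝ) (hx : 0 < x) : HasDerivAt g (4 * p x) x := by
    refine ((((hasDerivAt_id x).const_mul 2).add_const 4).mul (hasDerivAt_klFun hx.ne') |>.sub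
      ((((hasDerivAt_id x).sub_const 1).pow 2).const_mul 3)).congr_deriv ?_
    simp only [p, id, klFun_apply]
    ring
  have hg : Continuous g := by
    have := continuous_klFun
    fun_prop
  have hp : MonotoneOn p (Ioi 0) := monotoneOn_add_one_mul_log_sub
  have hp1 : p 1 = 0 := by simp [p]
  suffices g 1 ≤ g t by simpa [g, klFun_one] using this
  rcases le_total t 1 with h | h
  · refine antitoneOn_of_hasDerivWithinAt_nonpos (f' := fun x ↦ 4 * p x) (convex_Icc 0 1)
      hg.continuousOn (fun x hx ↦ ?_) (fun x hx ↦ ?_) ⟨ht, h⟩ ⟨zero_le_one, le_rfl⟩ h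
    · rw [interior_Icc] at hx ⊢
      exact (hg' x hx.1).hasDerivWithinAt
    · rw [interior_Icc] at hx
      have := hp hx.1 (mem_Ioi.mpr one_pos) hx.2.le
      linarith
  · refine monotoneOn_of_hasDerivWithinAt_nonneg (f' := fun x ↦ 4 * p x) (convex_Ici 1)
      hg.continuousOn (fun x hx ↦ ?_) (fun x hx ↦ ?_) (mem_Ici.mpr le_rfl) h h
    · rw [interior_Ici] at hx ⊢
      exact (hg' x (zero_lt_one.trans hx)).hasDerivWithinAt
    · rw [interior_Ici] at hx
      have := hp (mem_Ioi.mpr one_pos) (mem_Ioi.mpr (zero_lt_one.trans hx)) hx.le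
      linarith

lemma three_mul_sq_sub_le_mul_klFun_div {x y : ℝ} (hx : 0 ≤ x) (hy : 0 < y) :
    3 * (x - y) ^ 2 ≤ (2 * x + 4 * y) * (y * klFun (x / y)) := by
  have h := mul_le_mul_of_nonneg_left (three_mul_sq_sub_one_le_mul_klFun (div_nonneg hx hy.le))
    (sq_nonneg y)
  calc 3 * (x - y) ^ 2 = y ^ 2 * (3 * (x / y - 1) ^ 2) := by field_simp
    _ ≤ y ^ 2 * ((2 * (x / y) + 4) * klFun (x / y)) := h
    _ = (2 * x + 4 * y) * (y * klFun (x / y)) := by field_simp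

theorem sum_abs_sub_le_sqrt_two_mul_sum_mul_log_div {ι : Type*} [Fintype ι] {P Q : ι → ℝ}
    (hP : ∀ i, 0 ≤ P i) (hQ : ∀ i, 0 < Q i) (hPsum : ∑ i, P i = 1)
    (hQsum : ∑ i, Q i = 1) :
    ∑ i, |P i - Q i| ≤ √(2 * ∑ i, P i * log (P i / Q i)) := by
  set w : ι → ℝ := fun i ↦ (2 * P i + 4 * Q i) / 3
  set d : ι → ℝ := fun i ↦ Q i * klFun (P i / Q i)
  have hw (i : ι) : 0 ≤ w i := by have := hP i; have := hQ i; positivity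
  have hd (i : ι) : 0 ≤ d i := mul_nonneg (hQ i).le (klFun_nonneg (div_nonneg (hP i) (hQ i).le))
  have hw_sum : ∑ i, w i = 2 := by
    simp only [w, ← Finset.sum_div, Finset.sum_add_distrib, ← Finset.mul_sum, hPsum, hQsum]
    norm_num
  have hd_sum : ∑ i, d i = ∑ i, P i * log (P i / Q i) := by
    simp only [d, mul_klFun_div (hQ _).ne', Finset.sum_sub_distrib, Finset.sum_add_distrib, hPsum,
      hQsum]
    ring
  have hpt (i : ι) : |P i - Q i| ≤ √(w i) * √(d i) := by
    rw [← sqrt_mul (hw i), ← sqrt_sq_eq_abs]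
    refine sqrt_le_sqrt ?_
    have := three_mul_sq_sub_le_mul_klFun_div (hP i) (hQ i)
    simp only [w, d]
    linarith
  calc ∑ i, |P i - Q i| ≤ ∑ i, √(w i) * √(d i) := Finset.sum_le_sum fun i _ ↦ hpt i
    _ ≤ √(∑ i, w i) * √(∑ i, d i) := sum_sqrt_mul_sqrt_le _ hw hd
    _ = √(2 * ∑ i, P i * log (P i / Q i)) := by rw [hw_sum, hd_sum, sqrt_mul zero_le_two]

lemma mul_abs_log_div_le {x y : ℝ} (hx : 0 ≤ x) (hy : 0 < y) :
    x * |log (x / y)| ≤ x * log (x / y) + (y - x) + |x - y| := by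
  have := sub_le_mul_log_div hx hy
  rw [← abs_of_nonneg hx, ← abs_mul, abs_of_nonneg hx]
  rcases abs_cases (x * log (x / y)) with h | h <;> rcases abs_cases (x - y) with h' | h' <;>
    linarith

/-- for probability mass functions `P, Q` on a finite set with
`KL(P‖Q) = ε`, the expected absolute log-ratio satisfies
`E_P[|log(P(y)/Q(y))|] ≤ ε + √(2ε)`. -/
theorem stmt9
    {α : Type*} [Fintype α]
    (P Q : α → ℝ) (ε : ℝ)
    (hP0 : ∀ y, 0 ≤ P y) (hQ0 : ∀ y, 0 < Q y)
    (hPsum : ∑ y, P y = 1) (hQsum : ∑ y, Q y = 1)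
    (hKL : ∑ y, P y * Real.log (P y / Q y) = ε) :
    ∑ y, P y * |Real.log (P y / Q y)| ≤ ε + Real.sqrt (2 * ε) := by
  have hpinsker := sum_abs_sub_le_sqrt_two_mul_sum_mul_log_div hP0 hQ0 hPsum hQsum
  rw [hKL] at hpinsker
  calc ∑ y, P y * |log (P y / Q y)|
      ≤ ∑ y, (P y * log (P y / Q y) + (Q y - P y) + |P y - Q y|) :=
        Finset.sum_le_sum fun y _ ↦ mul_abs_log_div_le (hP0 y) (hQ0 y)
    _ = ε + ∑ y, |P y - Q y| := by
        simp only [Finset.sum_add_distrib, Finset.sum_sub_distrib, hKL, hPsum, hQsum]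
        ring
    _ ≤ ε + √(2 * ε) := by linarith
end
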